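/- Every acyclic USO of the n-cube with n ≥ 4 is (n−2)-nice. -/
import Mathlib


open Finset

/-- A directed step in the orientation given by outmap `s`:
from `v` along an outgoing coordinate `j`. -/
def USO.Step {n : ℕ} (s : Finset (Fin n) → Finset (Fin n))
    (v u : Finset (Fin n)) : Prop :=
  ∃ j, j ∈ s v ∧ u = symmDiff v {j}

/-- Reachability along directed paths. -/
def USO.Reach {n : ℕ} (s : Finset (Fin n) → Finset (Fin n)) :
    Finset (Fin n) → Finset (Fin n) → Prop :=
  Relation.ReflTransGen (USO.Step s)

/-- Existence of a directed path of length exactly `k`. -/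
def USO.StepN {n : ℕ} (s : Finset (Fin n) → Finset (Fin n)) :
    ℕ → Finset (Fin n) → Finset (Fin n) → Prop
  | 0, v, u => v = u
  | k + 1, v, u => ∃ w, USO.Step s v w ∧ USO.StepN s k w u

/-- `s` is (the outmap of) a unique sink orientation of the `n`-cube:
every face `F_{J,v} = {u : v ∆ u ⊆ J}` has a unique sink. -/
def IsUSO {n : ℕ} (s : Finset (Fin n) → Finset (Fin n)) : Prop :=
  ∀ J v : Finset (Fin n), ∃! u, symmDiff v u ⊆ J ∧ s u ∩ J = ∅

/-- The reachmap of `v`: all coordinates outgoing at some vertex reachable from `v`. -/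
def reachmap {n : ℕ} (s : Finset (Fin n) → Finset (Fin n))
    (v : Finset (Fin n)) : Set (Fin n) :=
  {j | ∃ u, USO.Reach s v u ∧ j ∈ s u}

/-- `s` is `i`-nice: every non-sink vertex has a directed path of length at most `i`
to a vertex of strictly smaller reachmap. -/
def IsNice {n : ℕ} (i : ℕ) (s : Finset (Fin n) → Finset (Fin n)) : Prop :=
  ∀ v, s v ≠ ∅ → ∃ u, (∃ k ≤ i, USO.StepN s k v u) ∧ reachmap s u ⊂ reachmap s v

/-- Acyclicity of the orientation. -/
def IsAcyclic {n : ℕ} (s : Finset (Fin n) → Finset (Fin n)) : Prop :=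
  ∀ v u, USO.Reach s v u → USO.Reach s u v → v = u


namespace AUSO

open USO

variable {n : ℕ} {s : Finset (Fin n) → Finset (Fin n)}

lemma reach_refl (v : Finset (Fin n)) : Reach s v v := Relation.ReflTransGen.refl

lemma reach_trans {a b c : Finset (Fin n)} (h1 : Reach s a b) (h2 : Reach s b c) :
    Reach s a c := Relation.ReflTransGen.trans h1 h2

lemma step_reach {a b : Finset (Fin n)} (h : Step s a b) : Reach s a b :=
  Relation.ReflTransGen.single h

lemma stepN_reach : ∀ {k : ℕ} {a b : Finset (Fin n)}, StepN s k a b → Reach s a b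
  | 0, a, b, h => by rw [show a = b from h]; exact Relation.ReflTransGen.refl
  | (k+1), _, _, ⟨_, hw, h⟩ => Relation.ReflTransGen.head hw (stepN_reach h)

lemma stepN_snoc : ∀ {k : ℕ} {a b c : Finset (Fin n)},
    StepN s k a b → Step s b c → StepN s (k+1) a c
  | 0, a, b, c, h, h2 => by rw [show a = b from h]; exact ⟨c, h2, rfl⟩
  | (k+1), _, _, _, ⟨w, hw, h⟩, h2 => ⟨w, hw, stepN_snoc h h2⟩

lemma mem_reachmap_of_mem {v : Finset (Fin n)} {j : Fin n} (h : j ∈ s v) :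
    j ∈ reachmap s v := ⟨v, reach_refl v, h⟩

lemma s_subset_reachmap (v : Finset (Fin n)) : ↑(s v) ⊆ reachmap s v :=
  fun _ h => mem_reachmap_of_mem h

lemma reachmap_mono {v u : Finset (Fin n)} (h : Reach s v u) :
    reachmap s u ⊆ reachmap s v := by
  rintro j ⟨w, hw, hj⟩
  exact ⟨w, reach_trans h hw, hj⟩

lemma ne_symmDiff_singleton (x : Finset (Fin n)) (c : Fin n) : x ≠ symmDiff x {c} := by
  intro h
  have hc : c ∈ symmDiff x {c} ↔ c ∉ x := by
    simp [Finset.mem_symmDiff]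
  rw [← h] at hc
  tauto

lemma symmDiff_singleton_cancel (x : Finset (Fin n)) (c : Fin n) :
    symmDiff (symmDiff x {c}) {c} = x := by
  rw [symmDiff_assoc, symmDiff_self, symmDiff_bot]

/-- Everything reachable differs from the start only inside the reachmap. -/
lemma conf {v z : Finset (Fin n)} (h : Reach s v z) :
    ↑(symmDiff v z) ⊆ reachmap s v := by
  induction h with
  | refl => simp
  | @tail b c hb hstep ih =>
      obtain ⟨j, hj, rfl⟩ := hstep
      intro a ha
      have ha' : a ∈ symmDiff (symmDiff v b) {j} := by
        rw [symmDiff_assoc]; exact ha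
      rcases Finset.mem_symmDiff.1 ha' with ⟨h1, _⟩ | ⟨h1, _⟩
      · exact ih h1
      · have : a = j := by simpa using h1
        subst this
        exact reachmap_mono hb (mem_reachmap_of_mem hj)

/-- Decomposition of reachmap at the first step. -/
lemma reachmap_decomp {x : Finset (Fin n)} {j : Fin n} (h : j ∈ reachmap s x) :
    j ∈ s x ∨ ∃ j₀ ∈ s x, j ∈ reachmap s (symmDiff x {j₀}) := by
  obtain ⟨z, hz, hj⟩ := h
  rcases Relation.ReflTransGen.cases_head hz with rfl | ⟨w, hw, hwz⟩
  · exact Or.inl hj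
  · obtain ⟨j₀, hj₀, rfl⟩ := hw
    exact Or.inr ⟨j₀, hj₀, ⟨z, hwz, hj⟩⟩

/-- From any vertex some vertex with empty outmap is reachable. -/
lemma exists_sink_reach (hac : IsAcyclic s) (x : Finset (Fin n)) :
    ∃ z, Reach s x z ∧ s z = ∅ := by
  classical
  suffices H : ∀ (k : ℕ) (x : Finset (Fin n)),
      (Finset.univ.filter (fun z => Reach s x z)).card ≤ k →
      ∃ z, Reach s x z ∧ s z = ∅ from H _ x le_rfl
  intro k
  induction k with
  | zero =>
      intro x hx
      have hpos : 0 < (Finset.univ.filter (fun z => Reach s x z)).card :=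
        Finset.card_pos.2 ⟨x, by
          simp only [Finset.mem_filter, Finset.mem_univ, true_and]
          exact reach_refl x⟩
      omega
  | succ k ih =>
      intro x hx
      by_cases hsx : s x = ∅
      · exact ⟨x, reach_refl x, hsx⟩
      · obtain ⟨j, hj⟩ := Finset.nonempty_iff_ne_empty.2 hsx
        have hstep : Step s x (symmDiff x {j}) := ⟨j, hj, rfl⟩
        have hsub : (Finset.univ.filter (fun z => Reach s (symmDiff x {j}) z)) ⊆
            (Finset.univ.filter (fun z => Reach s x z)) := by
          intro z hz
          simp only [Finset.mem_filter, Finset.mem_univ, true_and] at *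
          exact reach_trans (step_reach hstep) hz
        have hxnot : x ∉ (Finset.univ.filter (fun z => Reach s (symmDiff x {j}) z)) := by
          simp only [Finset.mem_filter, Finset.mem_univ, true_and]
          intro hr
          exact ne_symmDiff_singleton x j (hac _ _ (step_reach hstep) hr)
        have hlt : (Finset.univ.filter (fun z => Reach s (symmDiff x {j}) z)).card <
            (Finset.univ.filter (fun z => Reach s x z)).card := by
          apply Finset.card_lt_card
          rw [Finset.ssubset_iff_of_subset hsub]
          refine ⟨x, ?_, hxnot⟩
          simp only [Finset.mem_filter, Finset.mem_univ, true_and]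
          exact reach_refl x
        obtain ⟨z, hz1, hz2⟩ := ih (symmDiff x {j}) (by omega)
        exact ⟨z, reach_trans (step_reach hstep) hz1, hz2⟩

end AUSO

namespace AUSO
open USO
variable {n : ℕ} {s : Finset (Fin n) → Finset (Fin n)}

lemma symmDiff_singleton_of_mem {D : Finset (Fin n)} {j : Fin n} (h : j ∈ D) :
    symmDiff D {j} = D.erase j := by
  ext a
  simp only [Finset.mem_symmDiff, Finset.mem_erase, Finset.mem_singleton]
  constructor
  · rintro (⟨h1, h2⟩ | ⟨h1, h2⟩)
    · exact ⟨h2, h1⟩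
    · exact absurd (h1 ▸ h) h2
  · rintro ⟨h1, h2⟩
    exact Or.inl ⟨h2, h1⟩

lemma sink_unique (hs : IsUSO s) {K x y y' : Finset (Fin n)}
    (h1 : symmDiff x y ⊆ K) (h2 : s y ∩ K = ∅)
    (h3 : symmDiff x y' ⊆ K) (h4 : s y' ∩ K = ∅) : y = y' :=
  (hs K x).unique ⟨h1, h2⟩ ⟨h3, h4⟩

/-- Monotone path lemma: if `u` is a sink of the face spanned by `x ∆ u`,
then there is a directed path from `x` to `u` of length `|x ∆ u|`. -/
lemma mono_path (hs : IsUSO s) :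
    ∀ (k : ℕ) (x u : Finset (Fin n)), (symmDiff x u).card ≤ k →
    s u ∩ symmDiff x u = ∅ → StepN s ((symmDiff x u).card) x u := by
  intro k
  induction k with
  | zero =>
      intro x u hcard _
      have h0 : (symmDiff x u).card = 0 := by omega
      have : symmDiff x u = ∅ := Finset.card_eq_zero.1 h0
      have hxu : x = u := by
        have := symmDiff_eq_bot.1 (by simpa using this)
        exact this
      rw [h0]
      exact hxu
  | succ k ih =>
      intro x u hcard hu
      by_cases h0 : (symmDiff x u).card = 0
      · have : symmDiff x u = ∅ := Finset.card_eq_zero.1 h0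
        have hxu : x = u := symmDiff_eq_bot.1 (by simpa using this)
        rw [h0]
        exact hxu
      · have hne : x ≠ u := by
          intro h; subst h; simp [symmDiff_self] at h0
        have hex : ∃ j, j ∈ s x ∩ symmDiff x u := by
          by_contra hcon
          push_neg at hcon
          have hx0 : s x ∩ symmDiff x u = ∅ :=
            Finset.eq_empty_iff_forall_notMem.2 hcon
          exact hne (sink_unique hs (by simp [symmDiff_self]) hx0 le_rfl hu)
        obtain ⟨j, hj⟩ := hex
        have hjx : j ∈ s x := (Finset.mem_inter.1 hj).1
        have hjD : j ∈ symmDiff x u := (Finset.mem_inter.1 hj).2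
        have hD' : symmDiff (symmDiff x {j}) u = (symmDiff x u).erase j := by
          rw [symmDiff_assoc, symmDiff_comm ({j} : Finset (Fin n)) u, ← symmDiff_assoc,
            symmDiff_singleton_of_mem hjD]
        have hcard' : (symmDiff (symmDiff x {j}) u).card = (symmDiff x u).card - 1 := by
          rw [hD', Finset.card_erase_of_mem hjD]
        have hu' : s u ∩ symmDiff (symmDiff x {j}) u = ∅ := by
          rw [hD']
          have hsub : s u ∩ (symmDiff x u).erase j ⊆ s u ∩ symmDiff x u :=
            Finset.inter_subset_inter le_rfl (Finset.erase_subset _ _)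
          rw [hu] at hsub
          exact Finset.subset_empty.1 hsub
        have ihres := ih (symmDiff x {j}) u (by omega) hu'
        rw [hcard'] at ihres
        have : (symmDiff x u).card = ((symmDiff x u).card - 1) + 1 := by omega
        rw [this]
        exact ⟨symmDiff x {j}, ⟨j, hjx, rfl⟩, ihres⟩

end AUSO

namespace AUSO
open USO
variable {n : ℕ} {s : Finset (Fin n) → Finset (Fin n)}

/-- Cancellation identity used repeatedly. -/
lemma symmDiff_cancel_mid (a b c : Finset (Fin n)) :
    symmDiff a c = symmDiff (symmDiff a b) (symmDiff b c) := by
  ext x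
  simp only [Finset.mem_symmDiff]
  tauto

/-- L1: if `x` has the single outgoing edge `c`, then after crossing it,
`c` is never again outgoing (else an directed cycle through `x` arises). -/
lemma L1 (hs : IsUSO s) (hac : IsAcyclic s) {x : Finset (Fin n)} {c : Fin n}
    (hsx : s x = {c}) : c ∉ reachmap s (symmDiff x {c}) := by
  rintro ⟨z, hz, hcz⟩
  have hxstep : Step s x (symmDiff x {c}) := ⟨c, by simp [hsx], rfl⟩
  have key : ∃ z', Reach s (symmDiff x {c}) z' ∧ c ∉ symmDiff x z' := by
    by_cases hc : c ∈ symmDiff x z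
    · refine ⟨symmDiff z {c}, Relation.ReflTransGen.tail hz ⟨c, hcz, rfl⟩, ?_⟩
      have he : symmDiff x (symmDiff z {c}) = (symmDiff x z).erase c := by
        rw [← symmDiff_assoc, symmDiff_singleton_of_mem hc]
      rw [he]
      simp
    · exact ⟨z, hz, hc⟩
  obtain ⟨z', hz', hcz'⟩ := key
  have hdisj : s x ∩ symmDiff z' x = ∅ := by
    rw [hsx, symmDiff_comm]
    exact Finset.singleton_inter_of_notMem hcz'
  have hreach : Reach s z' x := stepN_reach (mono_path hs _ z' x le_rfl hdisj)
  exact ne_symmDiff_singleton x c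
    (hac _ _ (step_reach hxstep) (reach_trans hz' hreach))

end AUSO

set_option maxHeartbeats 1600000 in
open AUSO USO in
/-- every acyclic USO of the n-cube with n ≥ 4 is (n−2)-nice. -/
theorem auso_is_n_sub_two_nice {n : ℕ} (hn : 4 ≤ n)
    (s : Finset (Fin n) → Finset (Fin n)) (hs : IsUSO s) (hac : IsAcyclic s) :
    IsNice (n - 2) s := by
  classical
  intro v hv
  by_contra hbad
  push_neg at hbad
  have hbad' : ∀ u (k : ℕ), k ≤ n - 2 → StepN s k v u →
      reachmap s u = reachmap s v := by
    intro u k hk hstep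
    have hsub := reachmap_mono (stepN_reach hstep)
    by_contra hne
    exact hbad u ⟨k, hk, hstep⟩ (ssubset_iff_subset_ne.2 ⟨hsub, hne⟩)
  have hfin : (reachmap s v).Finite := Set.toFinite _
  set J := hfin.toFinset with hJdef
  have hJcoe : (J : Set (Fin n)) = reachmap s v := hfin.coe_toFinset
  have hmemJ : ∀ x, Reach s v x → s x ⊆ J := by
    intro x hx
    have h1 : (s x : Set (Fin n)) ⊆ (J : Set (Fin n)) := by
      rw [hJcoe]
      exact (s_subset_reachmap x).trans (reachmap_mono hx)
    exact_mod_cast h1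
  have hconfJ : ∀ x, Reach s v x → symmDiff v x ⊆ J := by
    intro x hx
    have h1 : ↑(symmDiff v x) ⊆ (J : Set (Fin n)) := by
      rw [hJcoe]; exact conf hx
    exact_mod_cast h1
  -- the sink of the face F_{J,v}
  obtain ⟨t, ⟨ht1, ht2⟩, htu⟩ := hs J v
  have htdisj : s t ∩ symmDiff v t = ∅ := by
    have hsub : s t ∩ symmDiff v t ⊆ s t ∩ J :=
      Finset.inter_subset_inter le_rfl ht1
    rw [ht2] at hsub
    exact Finset.subset_empty.1 hsub
  have htpath : StepN s ((symmDiff v t).card) v t :=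
    mono_path hs _ v t le_rfl htdisj
  have htreach : Reach s v t := stepN_reach htpath
  have hst : s t = ∅ := by
    have h2 : s t ⊆ J := hmemJ t htreach
    rwa [Finset.inter_eq_left.2 h2] at ht2
  have hrt : reachmap s t = ∅ := by
    apply Set.eq_empty_iff_forall_notMem.2
    rintro j ⟨u, hu, hju⟩
    rcases Relation.ReflTransGen.cases_head hu with rfl | ⟨w, ⟨j₀, hj₀, _⟩, _⟩
    · rw [hst] at hju; exact absurd hju (Finset.notMem_empty j)
    · rw [hst] at hj₀; exact absurd hj₀ (Finset.notMem_empty j₀)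
  have hrv_ne : reachmap s v ≠ ∅ := by
    obtain ⟨j, hj⟩ := Finset.nonempty_iff_ne_empty.2 hv
    intro h0
    have := mem_reachmap_of_mem (s := s) hj
    rw [h0] at this
    exact this
  by_cases hcase : (symmDiff v t).card ≤ n - 2
  · have := hbad' t _ hcase htpath
    rw [hrt] at this
    exact hrv_ne this.symm
  -- Now |v ∆ t| ≥ n-1
  have hh : n - 1 ≤ (symmDiff v t).card := by omega
  have hJcard_ge : n - 1 ≤ J.card := le_trans hh (Finset.card_le_card ht1)
  have hJcard_le : J.card ≤ n := by
    have := Finset.card_le_card (Finset.subset_univ J)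
    simpa using this
  -- the facet sinks σ q
  have Hσ : ∀ q : Fin n, ∃ u, (symmDiff v u ⊆ J.erase q ∧ s u ∩ J.erase q = ∅) ∧
      ∀ y, (symmDiff v y ⊆ J.erase q ∧ s y ∩ J.erase q = ∅) → y = u := by
    intro q
    obtain ⟨u, hu, huu⟩ := hs (J.erase q) v
    exact ⟨u, hu, huu⟩
  choose σ hσ hσu using Hσ
  have hσ1 : ∀ q, symmDiff v (σ q) ⊆ J.erase q := fun q => (hσ q).1
  have hσ2 : ∀ q, s (σ q) ∩ J.erase q = ∅ := fun q => (hσ q).2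
  have hσpath : ∀ q, StepN s ((symmDiff v (σ q)).card) v (σ q) := by
    intro q
    apply mono_path hs _ v (σ q) le_rfl
    have hsub : s (σ q) ∩ symmDiff v (σ q) ⊆ s (σ q) ∩ J.erase q :=
      Finset.inter_subset_inter le_rfl (hσ1 q)
    rw [hσ2 q] at hsub
    exact Finset.subset_empty.1 hsub
  have hσreach : ∀ q, Reach s v (σ q) := fun q => stepN_reach (hσpath q)
  have hσsub : ∀ q, s (σ q) ⊆ {q} := by
    intro q j hj
    have hjJ : j ∈ J := hmemJ (σ q) (hσreach q) hj
    by_contra hne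
    have : j ∈ s (σ q) ∩ J.erase q :=
      Finset.mem_inter.2 ⟨hj, Finset.mem_erase.2 ⟨by simpa using hne, hjJ⟩⟩
    rw [hσ2 q] at this
    exact absurd this (Finset.notMem_empty j)
  have hσt : ∀ q, q ∉ symmDiff v t → σ q = t := by
    intro q hq
    exact (hσu q t ⟨Finset.subset_erase.2 ⟨ht1, hq⟩, by simp [hst]⟩).symm
  have hσt' : ∀ q, σ q = t → q ∉ symmDiff v t := by
    intro q hq hqin
    have := (hσ1 q)
    rw [hq] at this
    exact Finset.notMem_erase q J (this hqin)
  have hσsing : ∀ q ∈ symmDiff v t, s (σ q) = {q} := by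
    intro q hq
    rcases Finset.subset_singleton_iff.1 (hσsub q) with h0 | h1
    · exfalso
      have : σ q = t := sink_unique hs ((hσ1 q).trans (Finset.erase_subset q J))
        (by simp [h0]) ht1 ht2
      exact hσt' q this hq
    · exact h1
  have hINJ : ∀ p ∈ J, ∀ p' ∈ J, σ p = σ p' → p = p' := by
    intro p hp p' hp' hpp'
    by_contra hne
    have h1 : s (σ p) = ∅ := by
      apply Finset.eq_empty_iff_forall_notMem.2
      intro j hj
      have e1 : j = p := by simpa using hσsub p hj
      have e2 : j = p' := by simpa using hσsub p' (hpp' ▸ hj)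
      exact hne (by rw [← e1, ← e2])
    have hpt : σ p = t := sink_unique hs ((hσ1 p).trans (Finset.erase_subset p J))
      (by simp [h1]) ht1 ht2
    have hp't : σ p' = t := hpp' ▸ hpt
    have hs1 : symmDiff v t ⊆ J.erase p := hpt ▸ hσ1 p
    have hs2 : symmDiff v t ⊆ J.erase p' := hp't ▸ hσ1 p'
    have hsub2 : symmDiff v t ⊆ (J.erase p).erase p' := by
      intro a ha
      exact Finset.mem_erase.2 ⟨Finset.mem_erase.1 (hs2 ha) |>.1, hs1 ha⟩
    have hc2 : ((J.erase p).erase p').card ≤ n - 2 := by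
      have e1 : p' ∈ J.erase p := Finset.mem_erase.2 ⟨fun h => hne h.symm, hp'⟩
      have c1 : ((J.erase p).erase p').card = (J.erase p).card - 1 :=
        Finset.card_erase_of_mem e1
      have c2 : (J.erase p).card = J.card - 1 := Finset.card_erase_of_mem hp
      omega
    have := Finset.card_le_card hsub2
    omega
  -- ▲ : if q ∈ reachmap x then x reaches σ q
  have diamond : ∀ x, Reach s v x → ∀ q, q ∈ reachmap s x → Reach s x (σ q) := by
    intro x hx q hqr
    obtain ⟨z, hz, hqz⟩ := hqr
    have hzv : symmDiff v z ⊆ J := hconfJ z (reach_trans hx hz)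
    have key : ∃ z', Reach s x z' ∧ symmDiff v z' ⊆ J.erase q := by
      by_cases hc : q ∈ symmDiff v z
      · refine ⟨symmDiff z {q}, Relation.ReflTransGen.tail hz ⟨q, hqz, rfl⟩, ?_⟩
        have he : symmDiff v (symmDiff z {q}) = (symmDiff v z).erase q := by
          rw [← symmDiff_assoc, symmDiff_singleton_of_mem hc]
        rw [he]
        exact Finset.erase_subset_erase q hzv
      · exact ⟨z, hz, Finset.subset_erase.2 ⟨hzv, hc⟩⟩
    obtain ⟨z', hz', hz'sub⟩ := key
    have hdisj : s (σ q) ∩ symmDiff z' (σ q) = ∅ := by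
      have hsub : symmDiff z' (σ q) ⊆ J.erase q := by
        have hdec := symmDiff_cancel_mid z' v (σ q)
        intro a ha
        rw [hdec] at ha
        rcases Finset.mem_symmDiff.1 ha with ⟨h1, _⟩ | ⟨h1, _⟩
        · exact hz'sub (by rwa [symmDiff_comm] at h1)
        · exact hσ1 q h1
      have h2 : s (σ q) ∩ symmDiff z' (σ q) ⊆ s (σ q) ∩ J.erase q :=
        Finset.inter_subset_inter le_rfl hsub
      rw [hσ2 q] at h2
      exact Finset.subset_empty.1 h2
    exact reach_trans hz' (stepN_reach (mono_path hs _ z' (σ q) le_rfl hdisj))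
  have hqJ_mem : ∀ q, q ∈ J ↔ q ∈ reachmap s v := by
    intro q
    rw [← hJcoe]
    simp
  -- at most one "full" direction
  have hFull : ∀ p ∈ J, ∀ p' ∈ J, reachmap s (σ p) = reachmap s v →
      reachmap s (σ p') = reachmap s v → p = p' := by
    intro p hp p' hp' h1 h2
    have r1 : Reach s (σ p) (σ p') :=
      diamond (σ p) (hσreach p) p' (by rw [h1, ← hqJ_mem]; exact hp')
    have r2 : Reach s (σ p') (σ p) :=
      diamond (σ p') (hσreach p') p (by rw [h2, ← hqJ_mem]; exact hp)
    exact hINJ p hp p' hp' (hac _ _ r1 r2)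
  -- non-full facet sinks are "drops": by badness they must be far
  have hdrop : ∀ q ∈ J, reachmap s (σ q) ≠ reachmap s v →
      ¬ ((symmDiff v (σ q)).card ≤ n - 2) := by
    intro q _ hne hle
    exact hne (hbad' (σ q) _ hle (hσpath q))
  rcases (by omega : J.card = n - 1 ∨ J.card = n) with hJc | hJc
  · -- |J| = n-1 : all facet sinks within n-2, so all full; contradicts hFull
    have hall : ∀ q ∈ J, reachmap s (σ q) = reachmap s v := by
      intro q hq
      by_contra hne
      apply hdrop q hq hne
      have hcard := Finset.card_le_card (hσ1 q)
      have : (J.erase q).card = J.card - 1 := Finset.card_erase_of_mem hq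
      omega
    have h1lt : 1 < J.card := by omega
    obtain ⟨p, hp, p', hp', hne⟩ := Finset.one_lt_card.1 h1lt
    exact hne (hFull p hp p' hp' (hall p hp) (hall p' hp'))
  · -- |J| = n : J = univ
    have hJuniv : J = Finset.univ := Finset.eq_univ_of_card J (by simpa using hJc)
    have hJmem : ∀ j : Fin n, j ∈ J := by intro j; rw [hJuniv]; exact Finset.mem_univ j
    have hrv_all : ∀ j : Fin n, j ∈ reachmap s v := by
      intro j; rw [← hqJ_mem]; exact hJmem j
    set vb := symmDiff v J with hvbdef
    -- pinning of non-full facet sinks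
    have hpin : ∀ q, reachmap s (σ q) ≠ reachmap s v →
        symmDiff v (σ q) = J.erase q ∧ symmDiff (σ q) {q} = vb := by
      intro q hq
      have hcard : ¬ ((symmDiff v (σ q)).card ≤ n - 2) := hdrop q (hJmem q) hq
      have hec : (J.erase q).card = n - 1 := by
        rw [Finset.card_erase_of_mem (hJmem q), hJc]
      have heq : symmDiff v (σ q) = J.erase q := by
        apply Finset.eq_of_subset_of_card_le (hσ1 q)
        omega
      constructor
      · exact heq
      · have h1 : σ q = symmDiff v (J.erase q) := by
          rw [← heq, symmDiff_symmDiff_cancel_left]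
        have h2 : symmDiff (J.erase q) {q} = J := by
          ext a
          simp only [Finset.mem_symmDiff, Finset.mem_erase, Finset.mem_singleton]
          constructor
          · rintro (⟨⟨_, h⟩, _⟩ | ⟨rfl, _⟩)
            · exact h
            · exact hJmem a
          · intro ha
            by_cases haq : a = q
            · exact Or.inr ⟨haq, fun hc => hc.1 haq⟩
            · exact Or.inl ⟨⟨haq, ha⟩, fun hc => haq (by simpa using hc)⟩
        rw [h1, symmDiff_assoc, h2]
    -- the set of pinned "non-full" directions in v∆t
    set NT := (symmDiff v t).filter (fun q => reachmap s (σ q) ≠ reachmap s v) with hNTdef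
    have hNTprop : ∀ q ∈ NT, q ∈ symmDiff v t ∧ reachmap s (σ q) ≠ reachmap s v := by
      intro q hq
      exact ⟨(Finset.mem_filter.1 hq).1, (Finset.mem_filter.1 hq).2⟩
    have hNTL1 : ∀ q ∈ NT, q ∉ reachmap s vb := by
      intro q hq
      obtain ⟨hq1, hq2⟩ := hNTprop q hq
      have hsing := hσsing q hq1
      have := L1 hs hac hsing
      rwa [(hpin q hq2).2] at this
    have hNTcard : n - 2 ≤ NT.card := by
      set Bf := Finset.univ.filter (fun q => reachmap s (σ q) = reachmap s v) with hBfdef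
      have hBf1 : Bf.card ≤ 1 := by
        apply Finset.card_le_one.2
        intro a ha b hb
        exact hFull a (hJmem a) b (hJmem b) (Finset.mem_filter.1 ha).2
          (Finset.mem_filter.1 hb).2
      have hsd : (Finset.univ \ symmDiff v t).card ≤ 1 := by
        rw [Finset.card_sdiff_of_subset (Finset.subset_univ _)]
        have := Finset.card_le_card (Finset.subset_univ (symmDiff v t))
        simp only [Finset.card_univ, Fintype.card_fin] at *
        omega
      have hcover : Finset.univ ⊆ NT ∪ ((Finset.univ \ symmDiff v t) ∪ Bf) := by
        intro q _
        by_cases h1 : q ∈ symmDiff v t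
        · by_cases h2 : reachmap s (σ q) = reachmap s v
          · exact Finset.mem_union.2 (Or.inr (Finset.mem_union.2 (Or.inr
              (Finset.mem_filter.2 ⟨Finset.mem_univ q, h2⟩))))
          · exact Finset.mem_union.2 (Or.inl (Finset.mem_filter.2 ⟨h1, h2⟩))
        · exact Finset.mem_union.2 (Or.inr (Finset.mem_union.2 (Or.inl
            (Finset.mem_sdiff.2 ⟨Finset.mem_univ q, h1⟩))))
      have := Finset.card_le_card hcover
      have h2 := Finset.card_union_le NT ((Finset.univ \ symmDiff v t) ∪ Bf)
      have h3 := Finset.card_union_le (Finset.univ \ symmDiff v t) Bf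
      simp only [Finset.card_univ, Fintype.card_fin] at this
      omega
    -- the pair sinks τ a b
    have Hτ : ∀ a b : Fin n, ∃ u,
        (symmDiff v u ⊆ (J.erase a).erase b ∧ s u ∩ (J.erase a).erase b = ∅) ∧
        ∀ y, (symmDiff v y ⊆ (J.erase a).erase b ∧ s y ∩ (J.erase a).erase b = ∅) → y = u := by
      intro a b
      obtain ⟨u, hu, huu⟩ := hs ((J.erase a).erase b) v
      exact ⟨u, hu, huu⟩
    choose τ hτ hτu using Hτ
    have hτ1 : ∀ a b, symmDiff v (τ a b) ⊆ (J.erase a).erase b := fun a b => (hτ a b).1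
    have hτ2 : ∀ a b, s (τ a b) ∩ (J.erase a).erase b = ∅ := fun a b => (hτ a b).2
    have hKcard : ∀ a b : Fin n, a ≠ b → ((J.erase a).erase b).card = n - 2 := by
      intro a b hab
      rw [Finset.card_erase_of_mem (Finset.mem_erase.2 ⟨fun h => hab h.symm, hJmem b⟩),
        Finset.card_erase_of_mem (hJmem a), hJc]
      omega
    have hτpath : ∀ a b, StepN s ((symmDiff v (τ a b)).card) v (τ a b) := by
      intro a b
      apply mono_path hs _ v (τ a b) le_rfl
      have hsub : s (τ a b) ∩ symmDiff v (τ a b) ⊆ s (τ a b) ∩ (J.erase a).erase b :=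
        Finset.inter_subset_inter le_rfl (hτ1 a b)
      rw [hτ2 a b] at hsub
      exact Finset.subset_empty.1 hsub
    have hτfull : ∀ a b, a ≠ b → reachmap s (τ a b) = reachmap s v := by
      intro a b hab
      apply hbad' (τ a b) _ _ (hτpath a b)
      have := Finset.card_le_card (hτ1 a b)
      rw [hKcard a b hab] at this
      omega
    have hτs : ∀ a b, s (τ a b) ⊆ {a, b} := by
      intro a b j hj
      by_contra hne
      simp only [Finset.mem_insert, Finset.mem_singleton, not_or] at hne
      have : j ∈ s (τ a b) ∩ (J.erase a).erase b := Finset.mem_inter.2 ⟨hj,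
        Finset.mem_erase.2 ⟨hne.2, Finset.mem_erase.2 ⟨hne.1, hJmem j⟩⟩⟩
      rw [hτ2 a b] at this
      exact absurd this (Finset.notMem_empty j)
    -- a reach-minimal pair sink x*
    set m : Finset (Fin n) → ℕ :=
      fun y => (Finset.univ.filter (fun z => Reach s y z)).card with hmdef
    have h01 : (⟨0, by omega⟩ : Fin n) ≠ ⟨1, by omega⟩ := by
      simp [Fin.ext_iff]
    set V := ((Finset.univ : Finset (Fin n × Fin n)).filter
        (fun p => p.1 ≠ p.2)).image (fun p => τ p.1 p.2) with hVdef
    have hVne : V.Nonempty := by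
      refine ⟨τ ⟨0, by omega⟩ ⟨1, by omega⟩, Finset.mem_image.2
        ⟨(⟨0, by omega⟩, ⟨1, by omega⟩), Finset.mem_filter.2 ⟨Finset.mem_univ _, h01⟩, rfl⟩⟩
    obtain ⟨xs, hxsV, hxsmin⟩ := Finset.exists_min_image V m hVne
    have hstuck : ∀ y ∈ V, Reach s xs y → y = xs := by
      intro y hy hr
      have hsub : (Finset.univ.filter (fun z => Reach s y z)) ⊆
          (Finset.univ.filter (fun z => Reach s xs z)) := by
        intro z hz
        simp only [Finset.mem_filter, Finset.mem_univ, true_and] at *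
        exact reach_trans hr hz
      have heq : (Finset.univ.filter (fun z => Reach s y z)) =
          (Finset.univ.filter (fun z => Reach s xs z)) :=
        Finset.eq_of_subset_of_card_le hsub (hxsmin y hy)
      have : xs ∈ Finset.univ.filter (fun z => Reach s y z) := by
        rw [heq]
        simp only [Finset.mem_filter, Finset.mem_univ, true_and]
        exact reach_refl xs
      simp only [Finset.mem_filter, Finset.mem_univ, true_and] at this
      exact hac y xs this hr
    obtain ⟨pr, hpr, hprτ⟩ := Finset.mem_image.1 hxsV
    have hprne : pr.1 ≠ pr.2 := (Finset.mem_filter.1 hpr).2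
    have hxsfull : reachmap s xs = reachmap s v := by
      rw [← hprτ]; exact hτfull pr.1 pr.2 hprne
    have hxsreach : Reach s v xs := by
      rw [← hprτ]; exact stepN_reach (hτpath pr.1 pr.2)
    -- key: for every q ∈ NT there is e ≠ q with τ q e = xs and xs = σ q ∆ {e}
    have hkey : ∀ q ∈ NT, ∃ e, e ≠ q ∧ τ q e = xs ∧ xs = symmDiff (σ q) {e} := by
      intro q hq
      obtain ⟨hq1, hq2⟩ := hNTprop q hq
      have hxsne : xs ≠ σ q := by
        intro h
        exact hq2 (by rw [← h, hxsfull])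
      have hreachσ : Reach s xs (σ q) :=
        diamond xs hxsreach q (by rw [hxsfull]; exact hrv_all q)
      rcases Relation.ReflTransGen.cases_tail hreachσ with heq | ⟨w, hw, hwstep⟩
      · exact absurd heq.symm hxsne
      · obtain ⟨e, he, heq⟩ := hwstep
        have hwσ : w = symmDiff (σ q) {e} := by
          rw [heq, symmDiff_singleton_cancel]
        have heq' : e ≠ q := by
          intro h
          apply hNTL1 q hq
          have hqe : q ∈ s w := by rw [← h]; exact he
          have hw2 : w = vb := by rw [hwσ, h, (hpin q hq2).2]
          rw [hw2] at hqe
          exact mem_reachmap_of_mem hqe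
        -- position of w
        have hepos : e ∈ J.erase q := Finset.mem_erase.2 ⟨heq', hJmem e⟩
        have hwpos : symmDiff v w = (J.erase q).erase e := by
          rw [hwσ, ← symmDiff_assoc, (hpin q hq2).1, symmDiff_singleton_of_mem hepos]
        -- monotone from w to τ q e
        have hdisj : s (τ q e) ∩ symmDiff w (τ q e) = ∅ := by
          have hsub : symmDiff w (τ q e) ⊆ (J.erase q).erase e := by
            have hdec := symmDiff_cancel_mid w v (τ q e)
            intro x hx
            rw [hdec] at hx
            rcases Finset.mem_symmDiff.1 hx with ⟨h1, _⟩ | ⟨h1, _⟩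
            · rw [symmDiff_comm, hwpos] at h1
              exact h1
            · exact hτ1 q e h1
          have h2 : s (τ q e) ∩ symmDiff w (τ q e) ⊆ s (τ q e) ∩ (J.erase q).erase e :=
            Finset.inter_subset_inter le_rfl hsub
          rw [hτ2 q e] at h2
          exact Finset.subset_empty.1 h2
        have hwτ : Reach s w (τ q e) :=
          stepN_reach (mono_path hs _ w (τ q e) le_rfl hdisj)
        have hτV : τ q e ∈ V := Finset.mem_image.2
          ⟨(q, e), Finset.mem_filter.2 ⟨Finset.mem_univ _, fun h => heq' h.symm⟩, rfl⟩
        have hτxs : τ q e = xs := hstuck (τ q e) hτV (reach_trans hw hwτ)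
        have hwxs : w = xs := hac w xs (hτxs ▸ hwτ) hw
        exact ⟨e, heq', hτxs, by rw [← hwxs, hwσ]⟩
    have hxs_s : ∀ q ∈ NT, ∀ e, τ q e = xs → s xs ⊆ {q, e} := by
      intro q _ e he
      rw [← he]
      exact hτs q e
    have hxs_ne : s xs ≠ ∅ := by
      intro h0
      have : xs = t := htu xs ⟨hconfJ xs hxsreach, by simp [h0]⟩
      rw [this, hrt] at hxsfull
      exact hrv_ne hxsfull.symm
    have hNT_ne : NT.Nonempty := Finset.card_pos.1 (by omega)
    by_cases hcard1 : (s xs).card = 1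
    · -- singleton outmap: xs is a facet sink σ c very close to v; L1 gives a drop within 2
      obtain ⟨c, hc⟩ := Finset.card_eq_one.1 hcard1
      obtain ⟨q₀, hq₀⟩ := hNT_ne
      obtain ⟨e₀, he₀ne, he₀τ, _⟩ := hkey q₀ hq₀
      have hcmem : c ∈ ({q₀, e₀} : Finset (Fin n)) := by
        apply hxs_s q₀ hq₀ e₀ he₀τ
        rw [hc]
        exact Finset.mem_singleton_self c
      have hxspos : symmDiff v xs ⊆ (J.erase q₀).erase e₀ := by
        rw [← he₀τ]; exact hτ1 q₀ e₀
      have hxsσ : xs = σ c := by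
        apply hσu c xs
        constructor
        · intro a ha
          have h2 := hxspos ha
          have hane : a ≠ e₀ := (Finset.mem_erase.1 h2).1
          have h3 : a ∈ J.erase q₀ := Finset.erase_subset _ _ h2
          have hanq : a ≠ q₀ := (Finset.mem_erase.1 h3).1
          have haJ : a ∈ J := (Finset.mem_erase.1 h3).2
          rcases Finset.mem_insert.1 hcmem with h4 | h4
          · exact Finset.mem_erase.2 ⟨by rw [h4]; exact hanq, haJ⟩
          · exact Finset.mem_erase.2 ⟨by rw [Finset.mem_singleton.1 h4]; exact hane, haJ⟩
        · rw [hc]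
          exact Finset.singleton_inter_of_notMem (Finset.notMem_erase c J)
      have hcfull : reachmap s (σ c) = reachmap s v := by rw [← hxsσ]; exact hxsfull
      have hcNT : c ∉ NT := fun h => (hNTprop c h).2 hcfull
      have hposq : ∀ q ∈ NT, q ∉ symmDiff v xs := by
        intro q hq hmem
        obtain ⟨e, _, hτe, _⟩ := hkey q hq
        have : symmDiff v xs ⊆ (J.erase q).erase e := by
          rw [← hτe]; exact hτ1 q e
        have := this hmem
        exact (Finset.mem_erase.1 ((Finset.erase_subset _ _) this)).1 rfl
      have hposc : c ∉ symmDiff v xs := by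
        intro hmem
        rw [hxsσ] at hmem
        exact (Finset.mem_erase.1 (hσ1 c hmem)).1 rfl
      have hsmall : (symmDiff v xs).card ≤ 1 := by
        have hsub : symmDiff v xs ⊆ Finset.univ \ insert c NT := by
          intro a ha
          refine Finset.mem_sdiff.2 ⟨Finset.mem_univ a, ?_⟩
          intro hmem
          rcases Finset.mem_insert.1 hmem with rfl | haNT
          · exact hposc ha
          · exact hposq a haNT ha
        have h1 := Finset.card_le_card hsub
        rw [Finset.card_sdiff_of_subset (Finset.subset_univ _),
          Finset.card_insert_of_notMem hcNT] at h1
        simp only [Finset.card_univ, Fintype.card_fin] at h1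
        omega
      have hpathxs : StepN s ((symmDiff v xs).card) v xs := by
        rw [hxsσ]
        exact hσpath c
      have hstepc : Step s xs (symmDiff xs {c}) := ⟨c, by rw [hc]; exact Finset.mem_singleton_self c, rfl⟩
      have hpathu : StepN s ((symmDiff v xs).card + 1) v (symmDiff xs {c}) :=
        stepN_snoc hpathxs hstepc
      have hfullu : reachmap s (symmDiff xs {c}) = reachmap s v :=
        hbad' _ _ (by omega) hpathu
      have := L1 hs hac hc
      rw [hfullu] at this
      exact this (hrv_all c)
    · -- outmap of xs has two elements: only possible if n = 4, killed by a 2-face analysis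
      -- s xs has at least two elements
      have hsne : (s xs).Nonempty := Finset.nonempty_iff_ne_empty.2 hxs_ne
      have h2c : 1 < (s xs).card := by
        have := Finset.card_pos.2 hsne
        omega
      obtain ⟨c, hc, c', hc', hcc'⟩ := Finset.one_lt_card.1 h2c
      have hNTsub : NT ⊆ {c, c'} := by
        intro q hq
        obtain ⟨e, hene, hτe, _⟩ := hkey q hq
        have hss := hxs_s q hq e hτe
        by_contra hqm
        have hcm := hss hc
        have hc'm := hss hc'
        simp only [Finset.mem_insert, Finset.mem_singleton, not_or] at hcm hc'm hqm
        have hce : c = e := by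
          rcases hcm with h | h
          · exact absurd h.symm hqm.1
          · exact h
        have hc'e : c' = e := by
          rcases hc'm with h | h
          · exact absurd h.symm hqm.2
          · exact h
        exact hcc' (hce.trans hc'e.symm)
      have hpair2 : ({c, c'} : Finset (Fin n)).card = 2 := by
        rw [Finset.card_insert_of_notMem (by simpa using hcc'), Finset.card_singleton]
      have hNTle : NT.card ≤ 2 := by
        have := Finset.card_le_card hNTsub
        omega
      have hNTeq : NT = {c, c'} :=
        Finset.eq_of_subset_of_card_le hNTsub (by omega)
      have hcNT : c ∈ NT := by rw [hNTeq]; exact Finset.mem_insert_self c _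
      have hc'NT : c' ∈ NT := by
        rw [hNTeq]; exact Finset.mem_insert_of_mem (Finset.mem_singleton_self c')
      obtain ⟨ec, hecne, hτec, hxsec⟩ := hkey c hcNT
      have hc'ec : c' = ec := by
        have := hxs_s c hcNT ec hτec hc'
        simp only [Finset.mem_insert, Finset.mem_singleton] at this
        rcases this with h | h
        · exact absurd h hcc'.symm
        · exact h
      have hxsc : xs = symmDiff (σ c) {c'} := by rw [hxsec, ← hc'ec]
      obtain ⟨ec', hec'ne, hτec', hxsec'⟩ := hkey c' hc'NT
      have hcec' : c = ec' := by
        have := hxs_s c' hc'NT ec' hτec' hc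
        simp only [Finset.mem_insert, Finset.mem_singleton] at this
        rcases this with h | h
        · exact absurd h hcc'
        · exact h
      have hxsc' : xs = symmDiff (σ c') {c} := by rw [hxsec', ← hcec']
      have hsxs : s xs = {c, c'} := by
        apply Finset.Subset.antisymm
        · rw [hc'ec]; exact hxs_s c hcNT ec hτec
        · intro a ha
          rcases Finset.mem_insert.1 ha with rfl | ha'
          · exact hc
          · rw [Finset.mem_singleton.1 ha']; exact hc'
      have hσcs : s (σ c) = {c} := hσsing c (hNTprop c hcNT).1
      have hσc's : s (σ c') = {c'} := hσsing c' (hNTprop c' hc'NT).1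
      have hvbc : symmDiff (σ c) {c} = vb := (hpin c (hNTprop c hcNT).2).2
      have hvbc' : symmDiff (σ c') {c'} = vb := (hpin c' (hNTprop c' hc'NT).2).2
      -- every direction outside {c, c'} is in the reachmap of the antipode vb
      have hout : ∀ j : Fin n, j ∉ ({c, c'} : Finset (Fin n)) → j ∈ reachmap s vb := by
        intro j hj
        have hjx : j ∈ reachmap s xs := by rw [hxsfull]; exact hrv_all j
        have hredσ : ∀ q : Fin n, s (σ q) = {q} → symmDiff (σ q) {q} = vb →
            j ∈ reachmap s (σ q) → j = q ∨ j ∈ reachmap s vb := by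
          intro q hq1 hq2 hjq
          rcases reachmap_decomp hjq with hmem | ⟨j₁, hj₁, hmem⟩
          · rw [hq1] at hmem; exact Or.inl (Finset.mem_singleton.1 hmem)
          · rw [hq1] at hj₁
            have : j₁ = q := Finset.mem_singleton.1 hj₁
            subst this
            rw [hq2] at hmem
            exact Or.inr hmem
        rcases reachmap_decomp hjx with hmem | ⟨j₀, hj₀, hmem⟩
        · rw [hsxs] at hmem; exact absurd hmem hj
        · rw [hsxs] at hj₀
          have hxc' : symmDiff xs {c'} = σ c := by
            rw [hxsc]; exact symmDiff_singleton_cancel _ c'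
          have hxc : symmDiff xs {c} = σ c' := by
            rw [hxsc']; exact symmDiff_singleton_cancel _ c
          rcases Finset.mem_insert.1 hj₀ with rfl | hj₀'
          · rw [hxc] at hmem
            rcases hredσ c' hσc's hvbc' hmem with rfl | h
            · exact absurd (Finset.mem_insert_of_mem (Finset.mem_singleton_self j)) hj
            · exact h
          · rw [Finset.mem_singleton.1 hj₀'] at hmem
            rw [hxc'] at hmem
            rcases hredσ c hσcs hvbc hmem with rfl | h
            · exact absurd (Finset.mem_insert_self j _) hj
            · exact h
      -- two remaining directions g, g'
      have hWcard : (Finset.univ \ ({c, c'} : Finset (Fin n))).card = n - 2 := by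
        rw [Finset.card_sdiff_of_subset (Finset.subset_univ _), hpair2]
        simp
      have hn4 : n = 4 := by omega
      obtain ⟨g, hg, g', hg', hgg'⟩ := Finset.one_lt_card.1
        (show 1 < (Finset.univ \ ({c, c'} : Finset (Fin n))).card by omega)
      have hWpair : ({g, g'} : Finset (Fin n)).card = 2 := by
        rw [Finset.card_insert_of_notMem (by simpa using hgg'), Finset.card_singleton]
      have hWeq : Finset.univ \ ({c, c'} : Finset (Fin n)) = {g, g'} := by
        apply (Finset.eq_of_subset_of_card_le ?_ (by omega)).symm
        intro a ha
        rcases Finset.mem_insert.1 ha with rfl | ha'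
        · exact hg
        · rw [Finset.mem_singleton.1 ha']; exact hg'
      have hvbr : reachmap s vb ⊆ ↑({g, g'} : Finset (Fin n)) := by
        intro j hj
        have hjc : j ≠ c := fun h => hNTL1 c hcNT (h ▸ hj)
        have hjc' : j ≠ c' := fun h => hNTL1 c' hc'NT (h ▸ hj)
        have : j ∈ Finset.univ \ ({c, c'} : Finset (Fin n)) := by
          refine Finset.mem_sdiff.2 ⟨Finset.mem_univ j, ?_⟩
          simp only [Finset.mem_insert, Finset.mem_singleton, not_or]
          exact ⟨hjc, hjc'⟩
        rw [hWeq] at this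
        exact_mod_cast this
      have hgr : g ∈ reachmap s vb := hout g (Finset.mem_sdiff.1 hg).2
      have hg'r : g' ∈ reachmap s vb := hout g' (Finset.mem_sdiff.1 hg').2
      have htonly : ∀ u, Reach s t u → u = t := by
        intro u hu
        rcases Relation.ReflTransGen.cases_head hu with rfl | ⟨w, ⟨j₀, hj₀, _⟩, _⟩
        · rfl
        · rw [hst] at hj₀; exact absurd hj₀ (Finset.notMem_empty j₀)
      have hvbt : Reach s vb t := by
        obtain ⟨z, hz1, hz2⟩ := exists_sink_reach hac vb
        have hzt : z = t := htu z ⟨by rw [hJuniv]; exact Finset.subset_univ _,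
          by rw [hz2]; exact Finset.empty_inter J⟩
        rwa [hzt] at hz1
      have hvbnet : vb ≠ t := by
        intro h
        rw [h, hrt] at hgr
        exact hgr
      have hvbtsub : symmDiff vb t ⊆ {g, g'} := by
        have h1 : ↑(symmDiff vb t) ⊆ reachmap s vb := conf hvbt
        have h2 : ↑(symmDiff vb t) ⊆ (({g, g'} : Finset (Fin n)) : Set (Fin n)) :=
          h1.trans hvbr
        exact_mod_cast h2
      -- the corner analysis around vb
      have corner : ∀ γ δ : Fin n, γ ≠ δ →
          reachmap s vb ⊆ ↑({γ, δ} : Finset (Fin n)) → δ ∈ reachmap s vb →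
          c ∉ ({γ, δ} : Finset (Fin n)) → symmDiff vb t = {γ} → False := by
        intro γ δ hγδ hr hδr hcm htγ
        have htvb : t = symmDiff vb {γ} := by
          rw [← htγ, symmDiff_symmDiff_cancel_left]
        have hzs : ∀ u, Reach s vb u → s u ⊆ ({γ, δ} : Finset (Fin n)) := by
          intro u hu
          have h1 : ↑(s u) ⊆ reachmap s vb := (s_subset_reachmap u).trans (reachmap_mono hu)
          exact_mod_cast h1.trans hr
        obtain ⟨z, hz, hδz⟩ := hδr
        have hzpos : symmDiff vb z ⊆ ({γ, δ} : Finset (Fin n)) := by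
          have h1 : ↑(symmDiff vb z) ⊆ reachmap s vb := conf hz
          exact_mod_cast h1.trans hr
        have hδvb : δ ∈ s vb := by
          by_cases h1 : γ ∈ symmDiff vb z <;> by_cases h2 : δ ∈ symmDiff vb z
          · -- z is the far corner: analyse first step of the path vb →* z
            rcases Relation.ReflTransGen.cases_head hz with heq | ⟨w, ⟨j, hj, hwj⟩, hwz⟩
            · rw [← heq] at h1
              simp [symmDiff_self] at h1
            · have hjm : j = γ ∨ j = δ := by
                have := hzs vb (reach_refl vb) hj
                simpa using this
              rcases hjm with rfl | rfl
              · have hwt : w = t := by rw [hwj, ← htvb]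
                have hzt : z = t := htonly z (by rw [← hwt]; exact hwz)
                rw [hzt, hst] at hδz
                exact absurd hδz (Finset.notMem_empty δ)
              · exact hj
          · -- z = t
            have hzeq : symmDiff vb z = {γ} := by
              apply Finset.Subset.antisymm
              · intro a ha
                rcases Finset.mem_insert.1 (hzpos ha) with rfl | ha'
                · exact Finset.mem_singleton_self a
                · rw [Finset.mem_singleton.1 ha'] at ha
                  exact absurd ha h2
              · intro a ha
                rw [Finset.mem_singleton.1 ha]
                exact h1
            have hzt : z = t := by
              rw [htvb, ← hzeq, symmDiff_symmDiff_cancel_left]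
            rw [hzt, hst] at hδz
            exact absurd hδz (Finset.notMem_empty δ)
          · -- z = vb ∆ {δ} : cycle
            have hzeq : symmDiff vb z = {δ} := by
              apply Finset.Subset.antisymm
              · intro a ha
                rcases Finset.mem_insert.1 (hzpos ha) with rfl | ha'
                · exact absurd ha h1
                · exact ha'
              · intro a ha
                rw [Finset.mem_singleton.1 ha]
                exact h2
            have hzy : z = symmDiff vb {δ} := by
              rw [← hzeq, symmDiff_symmDiff_cancel_left]
            have hback : Step s z vb := ⟨δ, hδz, by rw [hzy, symmDiff_singleton_cancel]⟩
            have hvbz : vb = z := hac vb z hz (step_reach hback)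
            exact absurd (hvbz.trans hzy) (ne_symmDiff_singleton vb δ)
          · -- z = vb
            have hzeq : symmDiff vb z = ∅ := by
              apply Finset.eq_empty_iff_forall_notMem.2
              intro a ha
              rcases Finset.mem_insert.1 (hzpos ha) with rfl | ha'
              · exact h1 ha
              · rw [Finset.mem_singleton.1 ha'] at ha
                exact h2 ha
            have : vb = z := symmDiff_eq_bot.1 (by simpa using hzeq)
            rw [← this] at hδz
            exact hδz
        -- y2 = vb ∆ {δ}
        have hy2r : Reach s vb (symmDiff vb {δ}) := step_reach ⟨δ, hδvb, rfl⟩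
        have hy2s : s (symmDiff vb {δ}) ⊆ {γ, δ} := hzs _ hy2r
        have hδny2 : δ ∉ s (symmDiff vb {δ}) := by
          intro hδy2
          have hback : Step s (symmDiff vb {δ}) vb :=
            ⟨δ, hδy2, by rw [symmDiff_singleton_cancel]⟩
          exact ne_symmDiff_singleton vb δ (hac vb _ hy2r (step_reach hback))
        have hy2γ : s (symmDiff vb {δ}) ⊆ {γ} := by
          intro a ha
          rcases Finset.mem_insert.1 (hy2s ha) with rfl | ha'
          · exact Finset.mem_singleton_self a
          · rw [Finset.mem_singleton.1 ha'] at ha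
            exact absurd ha hδny2
        have hy2sing : s (symmDiff vb {δ}) = {γ} := by
          rcases Finset.subset_singleton_iff.1 hy2γ with h0 | h1
          · exfalso
            have hy2t : symmDiff vb {δ} = t := htu _ ⟨by rw [hJuniv]; exact Finset.subset_univ _,
              by rw [h0]; exact Finset.empty_inter J⟩
            rw [htvb] at hy2t
            have : ({δ} : Finset (Fin n)) = {γ} := by
              have := congrArg (fun X => symmDiff vb X) hy2t
              simpa [← symmDiff_assoc, symmDiff_self] using this
            exact hγδ (Finset.mem_singleton.1 (this ▸ Finset.mem_singleton_self δ)).symm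
          · exact h1
        -- x2 = vb ∆ {δ} ∆ {γ}
        have hγnx2 : γ ∉ reachmap s (symmDiff (symmDiff vb {δ}) {γ}) := L1 hs hac hy2sing
        have hx2reach : Reach s vb (symmDiff (symmDiff vb {δ}) {γ}) :=
          reach_trans hy2r (step_reach ⟨γ, by rw [hy2sing]; exact Finset.mem_singleton_self γ, rfl⟩)
        have hx2r : reachmap s (symmDiff (symmDiff vb {δ}) {γ}) ⊆ ↑({δ} : Finset (Fin n)) := by
          intro j hj
          have hj2 : j ∈ reachmap s vb := reachmap_mono hx2reach hj
          have := hr hj2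
          simp only [Finset.coe_insert, Set.mem_insert_iff, Finset.coe_singleton,
            Set.mem_singleton_iff] at this
          rcases this with rfl | rfl
          · exact absurd hj hγnx2
          · simp
        have hx2s : s (symmDiff (symmDiff vb {δ}) {γ}) ⊆ {δ} := by
          have h1 : ↑(s (symmDiff (symmDiff vb {δ}) {γ})) ⊆ ↑({δ} : Finset (Fin n)) :=
            (s_subset_reachmap _).trans hx2r
          exact_mod_cast h1
        have hpos : symmDiff v (symmDiff (symmDiff vb {δ}) {γ}) =
            symmDiff (symmDiff J {δ}) {γ} := by
          rw [hvbdef, symmDiff_assoc v J ({δ} : Finset (Fin n)),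
            symmDiff_assoc v (symmDiff J {δ}) ({γ} : Finset (Fin n)),
            symmDiff_symmDiff_cancel_left]
        have hδJ : δ ∈ J := hJmem δ
        have hγJδ : γ ∈ J.erase δ := Finset.mem_erase.2 ⟨hγδ, hJmem γ⟩
        have hpos2 : symmDiff v (symmDiff (symmDiff vb {δ}) {γ}) = (J.erase δ).erase γ := by
          rw [hpos, symmDiff_singleton_of_mem hδJ, symmDiff_singleton_of_mem hγJδ]
        have hτeq : symmDiff (symmDiff vb {δ}) {γ} = τ γ δ := by
          apply hτu γ δ
          constructor
          · rw [hpos2]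
            intro a ha
            have h1 := Finset.mem_erase.1 ha
            have h2 := Finset.mem_erase.1 h1.2
            exact Finset.mem_erase.2 ⟨h2.1, Finset.mem_erase.2 ⟨h1.1, h2.2⟩⟩
          · apply Finset.eq_empty_iff_forall_notMem.2
            intro j hj
            have hj1 := Finset.mem_inter.1 hj
            have : j = δ := Finset.mem_singleton.1 (hx2s hj1.1)
            subst this
            exact (Finset.mem_erase.1 hj1.2).1 rfl
        have hfull2 : reachmap s (symmDiff (symmDiff vb {δ}) {γ}) = reachmap s v := by
          rw [hτeq]; exact hτfull γ δ hγδ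
        have hcx : c ∈ reachmap s (symmDiff (symmDiff vb {δ}) {γ}) := by
          rw [hfull2]; exact hrv_all c
        have := hx2r hcx
        simp only [Finset.coe_singleton, Set.mem_singleton_iff] at this
        exact hcm (by rw [this]; exact Finset.mem_insert_of_mem (Finset.mem_singleton_self δ))
      -- apply the corner analysis
      have hcg : c ∉ ({g, g'} : Finset (Fin n)) := by
        intro h
        rcases Finset.mem_insert.1 h with rfl | h'
        · exact (Finset.mem_sdiff.1 hg).2 (Finset.mem_insert_self c _)
        · exact (Finset.mem_sdiff.1 hg').2
            (by rw [← Finset.mem_singleton.1 h']; exact Finset.mem_insert_self c _)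
      by_cases hgm : g ∈ symmDiff vb t <;> by_cases hg'm : g' ∈ symmDiff vb t
      · -- both : |v∆t| = n - 2, contradiction with hh
        have hvbteq : symmDiff vb t = {g, g'} := by
          apply Finset.Subset.antisymm hvbtsub
          intro a ha
          rcases Finset.mem_insert.1 ha with rfl | ha'
          · exact hgm
          · rw [Finset.mem_singleton.1 ha']; exact hg'm
        have hvt : symmDiff v t = symmDiff J {g, g'} := by
          rw [symmDiff_cancel_mid v vb t, hvbdef, symmDiff_symmDiff_cancel_left, hvbteq]
        have hgg'd : ({g, g'} : Finset (Fin n)) = symmDiff {g} {g'} := by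
          ext a
          simp only [Finset.mem_insert, Finset.mem_singleton, Finset.mem_symmDiff]
          constructor
          · rintro (rfl | rfl)
            · exact Or.inl ⟨rfl, fun h => hgg' h⟩
            · exact Or.inr ⟨rfl, fun h => hgg' h.symm⟩
          · rintro (⟨h, _⟩ | ⟨h, _⟩)
            · exact Or.inl h
            · exact Or.inr h
        have hvt2 : symmDiff v t = (J.erase g).erase g' := by
          rw [hvt, hgg'd, ← symmDiff_assoc, symmDiff_singleton_of_mem (hJmem g),
            symmDiff_singleton_of_mem (Finset.mem_erase.2 ⟨fun h => hgg' h.symm, hJmem g'⟩)]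
        have := hKcard g g' hgg'
        rw [← hvt2] at this
        omega
      · -- only g
        have hvbteq : symmDiff vb t = {g} := by
          apply Finset.Subset.antisymm
          · intro a ha
            rcases Finset.mem_insert.1 (hvbtsub ha) with rfl | ha'
            · exact Finset.mem_singleton_self a
            · rw [Finset.mem_singleton.1 ha'] at ha
              exact absurd ha hg'm
          · intro a ha
            rw [Finset.mem_singleton.1 ha]
            exact hgm
        exact corner g g' hgg' hvbr hg'r hcg hvbteq
      · -- only g'
        have hvbteq : symmDiff vb t = {g'} := by
          apply Finset.Subset.antisymm
          · intro a ha
            rcases Finset.mem_insert.1 (hvbtsub ha) with rfl | ha'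
            · exact absurd ha hgm
            · exact ha'
          · intro a ha
            rw [Finset.mem_singleton.1 ha]
            exact hg'm
        apply corner g' g (fun h => hgg' h.symm) ?_ hgr ?_ hvbteq
        · rw [Finset.pair_comm g' g]
          exact hvbr
        · rw [Finset.pair_comm g' g]
          exact hcg
      · -- neither : vb = t, contradiction
        have hvbteq : symmDiff vb t = ∅ := by
          apply Finset.eq_empty_iff_forall_notMem.2
          intro a ha
          rcases Finset.mem_insert.1 (hvbtsub ha) with rfl | ha'
          · exact hgm ha
          · rw [Finset.mem_singleton.1 ha'] at ha
            exact hg'm ha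
        exact hvbnet (symmDiff_eq_bot.1 (by simpa using hvbteq))
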